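/- Let G and H be connected finite simple graphs, where G has minimum degree d ≥ 1 and H has maximum degree Δ(H) ≥ d. Let S ⊆ V(H) be a maximum G-free subset of V(H); among all maximum G-free subsets, suppose S is chosen so that the induced subgraph H∖S has as few connected (Δ(H)−d)-regular subgraphs as possible, and subject to that, so that H[S] has the minimum possible number of connected components. Suppose H∖S has a connected (Δ(H)−d)-regular subgraph H_0, and for each v ∈ V(H_0) let G_v denote the unique copy of G contained in H[S ∪ {v}]. If v, w ∈ V(H_0) are distinct vertices such that the subgraphs G_v − v and G_w − w of H are different, then v and w have no common neighbor in S. -/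

import Mathlib

/-!
A vertex `x` of `H₀` has `Δ(H) - δ(G)` neighbours off `S` and at least `δ(G)` in its copy `G_x`,
so its neighbours in `S` are exactly its neighbours in `G_x`. Trading any `y ∈ G_x - x` for `x`
keeps `S` maximum `G`-free with the same number of regular subgraphs, one of them through `y`; the
same count at `y` shows that `G_x` is induced on `S ∪ {x}`, so `G_x - x` is a union of components
of `H[S]`. It is a single component, since otherwise trading for `x` a non-cut vertex of one of
them would merge components. Hence a common neighbour `u ∈ S` of `v` and `w` makes both `G_v - v`
and `G_w - w` the component of `u` in `H[S]`.
-/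

open SimpleGraph

/-- `H` contains a subgraph isomorphic to `G`, i.e. there is an injective graph
homomorphism from `G` to `H`. -/
def HasCopy {α β : Type*} (G : SimpleGraph α) (H : SimpleGraph β) : Prop :=
  ∃ f : G →g H, Function.Injective f

/-- `S` is a `G`-free subset of the vertices of `H` of maximum cardinality. -/
def MaxFreeSubset {α V : Type*} (G : SimpleGraph α) (H : SimpleGraph V) (S : Set V) :
    Prop :=
  ¬ HasCopy G (H.induce S) ∧
    ∀ T : Set V, ¬ HasCopy G (H.induce T) → T.ncard ≤ S.ncard

/-- `H'` is a connected `r`-regular subgraph of `H ∖ S` (the subgraph of `H` induced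
on the complement of `S`). -/
def IsRegConnSubgraphOff {V : Type*} (H : SimpleGraph V) (S : Set V) (r : ℕ)
    (H' : H.Subgraph) : Prop :=
  H'.verts ⊆ Sᶜ ∧ H'.Connected ∧ ∀ v ∈ H'.verts, (H'.neighborSet v).ncard = r

/-- The number of connected `r`-regular subgraphs of `H ∖ S`. -/
noncomputable def regCount {V : Type*} (H : SimpleGraph V) (S : Set V) (r : ℕ) : ℕ :=
  {H' : H.Subgraph | IsRegConnSubgraphOff H S r H'}.ncard

/-- The number of connected components of the induced subgraph `H[S]`. -/
noncomputable def compCount {V : Type*} (H : SimpleGraph V) (S : Set V) : ℕ :=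
  Nat.card (H.induce S).ConnectedComponent

/-- `K` is a copy of `G` inside `H[W]`: a subgraph of `H` whose vertices lie in `W`
and which is isomorphic to `G`. -/
def IsCopyIn {α V : Type*} (G : SimpleGraph α) (H : SimpleGraph V) (W : Set V)
    (K : H.Subgraph) : Prop :=
  K.verts ⊆ W ∧ Nonempty (K.coe ≃g G)

theorem Set.eq_inter_and_eq_sdiff_of_ncard_le {V : Type*} {N T A B : Set V} (hN : N.Finite)
    (hA : A ⊆ N ∩ T) (hB : B ⊆ N \ T) (hcard : N.ncard ≤ A.ncard + B.ncard) :
    A = N ∩ T ∧ B = N \ T := by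
  have hsplit := Set.ncard_inter_add_ncard_sdiff_eq_ncard N T hN
  have hA' := Set.ncard_le_ncard hA (hN.subset Set.inter_subset_left)
  have hB' := Set.ncard_le_ncard hB (hN.subset Set.sdiff_subset)
  exact ⟨Set.eq_of_subset_of_ncard_le hA (by omega) (hN.subset Set.inter_subset_left),
    Set.eq_of_subset_of_ncard_le hB (by omega) (hN.subset Set.sdiff_subset)⟩

namespace SimpleGraph

variable {V W : Type*}

theorem Reachable.mem_of_forall_adj {Γ : SimpleGraph V} {P : Set V}
    (hP : ∀ a ∈ P, ∀ b, Γ.Adj a b → b ∈ P) {a b : V} (hab : Γ.Reachable a b) (ha : a ∈ P) :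
    b ∈ P := by
  rw [reachable_iff_reflTransGen] at hab
  induction hab with
  | refl => exact ha
  | tail _ hbc ih => exact hP _ ih _ hbc

theorem card_connectedComponent_lt_of_surjective [Finite V] {Γ : SimpleGraph V}
    {Γ' : SimpleGraph W} (f : V → Γ'.ConnectedComponent) (hf : ∀ a b, Γ.Adj a b → f a = f b)
    (hsurj : Function.Surjective f) {a b : V} (hab : ¬Γ.Reachable a b) (hfab : f a = f b) :
    Nat.card Γ'.ConnectedComponent < Nat.card Γ.ConnectedComponent := by
  classical
  have hreach : ∀ u v, Γ.Reachable u v → f u = f v := fun u v huv =>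
    huv.mem_of_forall_adj (P := {w | f u = f w}) (fun c hc d hcd => hc.trans (hf c d hcd)) rfl
  let g : Γ.ConnectedComponent → Γ'.ConnectedComponent :=
    ConnectedComponent.lift f fun u v p _ => hreach u v p.reachable
  have hg : Function.Surjective g := fun y =>
    let ⟨c, hc⟩ := hsurj y; ⟨Γ.connectedComponentMk c, hc⟩
  have hg' : ¬Function.Injective g := fun hinj =>
    hab (ConnectedComponent.exact (hinj (a₁ := Γ.connectedComponentMk a) hfab))
  have := Fintype.ofFinite Γ.ConnectedComponent
  have := Fintype.ofSurjective g hg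
  simpa only [Nat.card_eq_fintype_card] using Fintype.card_lt_of_surjective_not_injective g hg hg'

/-- A vertex `s` farthest from `r` is not a cut vertex of the component of `r`. -/
theorem exists_forall_exists_walk_notMem_support [Finite V] (Γ : SimpleGraph V) (r : V) :
    ∃ s, Γ.Reachable r s ∧ ∀ t, Γ.Reachable r t → t ≠ s → ∃ p : Γ.Walk t r, s ∉ p.support := by
  classical
  obtain ⟨s, hrs, hmax⟩ :=
    Set.exists_max_image {t | Γ.Reachable r t} (Γ.dist r) (Set.toFinite _) ⟨r, .rfl⟩
  refine ⟨s, hrs, fun t hrt hts => ?_⟩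
  obtain ⟨p, hp⟩ := hrt.symm.exists_walk_length_eq_dist
  refine ⟨p, fun hs => ?_⟩
  have hlen := congrArg Walk.length (p.take_spec hs)
  rw [Walk.length_append] at hlen
  have htake : (p.takeUntil s hs).length ≠ 0 := fun h => hts (Walk.eq_of_length_eq_zero h)
  have hdrop : Γ.dist r s ≤ (p.dropUntil s hs).length := dist_comm (G := Γ) ▸ dist_le _
  have hfar := hmax t hrt
  rw [dist_comm] at hfar
  omega

theorem Walk.exists_adj_reachable_induce {H : SimpleGraph V} {S : Set V} {x : V} (hx : x ∉ S)
    {a : V} (p : H.Walk a x) (hp : ∀ v ∈ p.support, v ∈ insert x S) (ha : a ∈ S) :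
    ∃ c : S, H.Adj c x ∧ (H.induce S).Reachable ⟨a, ha⟩ c := by
  induction p with
  | nil => exact absurd ha hx
  | @cons a b x hab p ih =>
    by_cases hbx : b = x
    · subst hbx
      exact ⟨⟨a, ha⟩, hab, .rfl⟩
    have hbS : b ∈ S := (hp b (by simp)).resolve_left hbx
    obtain ⟨c, hcx, hbc⟩ := ih hx (fun v hv => hp v (by simp [hv])) hbS
    exact ⟨c, hcx, (show (H.induce S).Adj ⟨a, ha⟩ ⟨b, hbS⟩ from hab).reachable.trans hbc⟩

end SimpleGraph

namespace SimpleGraph.Subgraph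

variable {V : Type*} {H : SimpleGraph V}

theorem verts_subset_of_neighborSet_subset {A B : H.Subgraph} (hA : A.Connected) {x : V}
    (hxA : x ∈ A.verts) (hxB : x ∈ B.verts)
    (hAB : ∀ y ∈ A.verts, y ∈ B.verts → A.neighborSet y ⊆ B.neighborSet y) :
    A.verts ⊆ B.verts := fun y hy =>
  (hA.coe.preconnected ⟨x, hxA⟩ ⟨y, hy⟩).mem_of_forall_adj
    (P := {a : A.verts | (a : V) ∈ B.verts})
    (fun a ha _ hab => B.neighborSet_subset_verts a (hAB a a.2 ha hab)) hxB

theorem eq_of_connected_of_neighborSet_eq {A B : H.Subgraph} (hA : A.Connected)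
    (hB : B.Connected) {f : V → Set V} (hAf : ∀ y ∈ A.verts, A.neighborSet y = f y)
    (hBf : ∀ y ∈ B.verts, B.neighborSet y = f y) {x : V} (hxA : x ∈ A.verts)
    (hxB : x ∈ B.verts) : A = B := by
  have hverts : A.verts = B.verts :=
    (verts_subset_of_neighborSet_subset hA hxA hxB fun y hyA hyB =>
        ((hAf y hyA).trans (hBf y hyB).symm).subset).antisymm
      (verts_subset_of_neighborSet_subset hB hxB hxA fun y hyB hyA =>
        ((hBf y hyB).trans (hAf y hyA).symm).subset)
  refine Subgraph.ext hverts (funext₂ fun a b => propext ⟨fun h => ?_, fun h => ?_⟩)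
  · change b ∈ B.neighborSet a
    rw [hBf a (hverts ▸ h.fst_mem), ← hAf a h.fst_mem]
    exact h
  · change b ∈ A.neighborSet a
    rw [hAf a (hverts ▸ h.fst_mem), ← hBf a h.fst_mem]
    exact h

theorem Connected.exists_adj_reachable_induce {K : H.Subgraph} (hK : K.Connected) {S : Set V}
    {x : V} (hx : x ∉ S) (hKS : K.verts ⊆ insert x S)
    (hxK : x ∈ K.verts) {a : V} (ha : a ∈ S) (haK : a ∈ K.verts) :
    ∃ c : S, H.Adj c x ∧ (H.induce S).Reachable ⟨a, ha⟩ c :=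
  let ⟨p, hp⟩ := (K.connected_iff_forall_exists_walk_subgraph.1 hK).2 haK hxK
  p.exists_adj_reachable_induce hx (fun _ hv => hKS (hp.1 (p.mem_verts_toSubgraph.2 hv))) ha

theorem mem_verts_of_reachable_induce {K : H.Subgraph} {S : Set V}
    (hK : ∀ y ∈ K.verts, H.neighborSet y ∩ S ⊆ K.neighborSet y) {a b : S}
    (hab : (H.induce S).Reachable a b) (ha : (a : V) ∈ K.verts) : (b : V) ∈ K.verts :=
  hab.mem_of_forall_adj (P := {c : S | (c : V) ∈ K.verts})
    (fun c hc d hcd => K.neighborSet_subset_verts _ (hK c hc ⟨hcd, d.2⟩)) ha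

end SimpleGraph.Subgraph

section Copies

variable {α V : Type*} {G : SimpleGraph α} {H : SimpleGraph V}

theorem hasCopy_induce_iff {W : Set V} :
    HasCopy G (H.induce W) ↔ ∃ K : H.Subgraph, IsCopyIn G H W K := by
  constructor
  · rintro ⟨f, hf⟩
    let c : Copy G H := (Copy.induce H W).comp (f.toCopy hf)
    refine ⟨c.toSubgraph, ?_, ⟨c.isoToSubgraph.symm⟩⟩
    rintro _ ⟨a, -, rfl⟩
    exact (f a).2
  · rintro ⟨K, hKW, ⟨e⟩⟩
    refine ⟨⟨fun a => ⟨e.symm a, hKW (e.symm a).2⟩,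
      fun hab => K.adj_sub (e.symm.map_adj_iff.2 hab)⟩,
      fun a b hab => e.symm.injective (Subtype.ext (Subtype.ext_iff.1 hab :))⟩

theorem IsCopyIn.connected {W : Set V} {K : H.Subgraph} (hK : IsCopyIn G H W K)
    (hG : G.Connected) : K.Connected :=
  let ⟨e⟩ := hK.2
  ⟨hG.map e.symm.toHom e.symm.surjective⟩

theorem IsCopyIn.minDegree_le [Fintype α] [DecidableRel G.Adj] {W : Set V} {K : H.Subgraph}
    (hK : IsCopyIn G H W K) {y : V} (hy : y ∈ K.verts) :
    G.minDegree ≤ (K.neighborSet y).ncard := by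
  obtain ⟨e⟩ := hK.2
  calc G.minDegree ≤ G.degree (e ⟨y, hy⟩) := G.minDegree_le_degree _
    _ = (K.neighborSet y).ncard := by
      rw [← card_neighborSet_eq_degree, ← Nat.card_eq_fintype_card, ← Nat.card_coe_set_eq,
        Nat.card_congr ((e.mapNeighborSet ⟨y, hy⟩).symm.trans (K.coeNeighborSetEquiv ⟨y, hy⟩))]

theorem IsCopyIn.mem_verts_of_not_hasCopy {T : Set V} {y : V} {K : H.Subgraph}
    (hK : IsCopyIn G H (insert y T) K) (hT : ¬HasCopy G (H.induce T)) : y ∈ K.verts := by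
  by_contra hy
  refine hT (hasCopy_induce_iff.2 ⟨K, fun z hz => ?_, hK.2⟩)
  exact (hK.1 hz).resolve_left fun h => hy (h ▸ hz)

variable [Finite V]

theorem MaxFreeSubset.exists_isCopyIn_insert {T : Set V} (hT : MaxFreeSubset G H T) {z : V}
    (hz : z ∉ T) : ∃ K : H.Subgraph, IsCopyIn G H (insert z T) K := by
  refine hasCopy_induce_iff.1 (by_contra fun h => ?_)
  have := hT.2 _ h
  rw [Set.ncard_insert_of_notMem hz] at this
  omega

theorem MaxFreeSubset.insert_sdiff_singleton {S : Set V} (hS : MaxFreeSubset G H S) {x y : V}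
    (hx : x ∉ S) (hy : y ∈ S) {Gx : H.Subgraph}
    (hGxU : ∀ K : H.Subgraph, IsCopyIn G H (insert x S) K → K = Gx) (hyGx : y ∈ Gx.verts) :
    MaxFreeSubset G H (insert x (S \ {y})) := by
  have hfree : ¬HasCopy G (H.induce (insert x (S \ {y}))) := by
    rw [hasCopy_induce_iff]
    rintro ⟨K, hKT, hKG⟩
    obtain rfl := hGxU K ⟨hKT.trans (Set.insert_subset_insert Set.sdiff_subset), hKG⟩
    rcases hKT hyGx with rfl | ⟨-, hyy⟩
    · exact hx hy
    · exact hyy rfl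
  have hcard : (insert x (S \ {y})).ncard = S.ncard := by
    rw [Set.ncard_insert_of_notMem fun h => hx h.1, Set.ncard_sdiff_singleton_of_mem hy]
    have := (Set.ncard_pos (s := S)).2 ⟨y, hy⟩
    omega
  exact ⟨hfree, fun T hT => (hS.2 T hT).trans_eq hcard.symm⟩

end Copies

section Regular

variable {α V : Type*} [Fintype α] [Fintype V] {G : SimpleGraph α} [DecidableRel G.Adj]
  {H : SimpleGraph V} [DecidableRel H.Adj]

/-- `y` has at least `δ(G)` neighbours in `K ⊆ T ∪ {y}` and exactly `Δ(H) - δ(G)` in `C ⊆ Tᶜ`,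
which exhausts its at most `Δ(H)` neighbours. -/
theorem IsRegConnSubgraphOff.neighborSet_eq {T : Set V} (hT : ¬HasCopy G (H.induce T))
    {C : H.Subgraph} (hC : IsRegConnSubgraphOff H T (H.maxDegree - G.minDegree) C) {y : V}
    (hy : y ∈ C.verts) {K : H.Subgraph} (hK : IsCopyIn G H (insert y T) K) :
    K.neighborSet y = H.neighborSet y ∩ T ∧ C.neighborSet y = H.neighborSet y \ T := by
  have hKT : K.neighborSet y ⊆ H.neighborSet y ∩ T := fun z hz =>
    ⟨hz.adj_sub, (hK.1 (K.edge_vert hz.symm)).resolve_left hz.adj_sub.ne.symm⟩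
  have hCT : C.neighborSet y ⊆ H.neighborSet y \ T := fun z hz =>
    ⟨hz.adj_sub, hC.1 (C.edge_vert hz.symm)⟩
  refine Set.eq_inter_and_eq_sdiff_of_ncard_le (Set.toFinite _) hKT hCT ?_
  have hK_deg := hK.minDegree_le (hK.mem_verts_of_not_hasCopy hT)
  have hC_deg := hC.2.2 y hy
  have hH_deg : (H.neighborSet y).ncard ≤ H.maxDegree := by
    rw [← Nat.card_coe_set_eq, Nat.card_eq_fintype_card, card_neighborSet_eq_degree]
    exact H.degree_le_maxDegree y
  omega

theorem IsRegConnSubgraphOff.neighborSet_eq_sdiff {T : Set V} (hT : MaxFreeSubset G H T)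
    {C : H.Subgraph} (hC : IsRegConnSubgraphOff H T (H.maxDegree - G.minDegree) C) {y : V}
    (hy : y ∈ C.verts) : C.neighborSet y = H.neighborSet y \ T :=
  let ⟨_, hK⟩ := hT.exists_isCopyIn_insert (hC.1 hy)
  (hC.neighborSet_eq hT.1 hy hK).2

theorem IsRegConnSubgraphOff.eq_of_mem {T : Set V} (hT : MaxFreeSubset G H T)
    {A B : H.Subgraph} (hA : IsRegConnSubgraphOff H T (H.maxDegree - G.minDegree) A)
    (hB : IsRegConnSubgraphOff H T (H.maxDegree - G.minDegree) B) {x : V}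
    (hxA : x ∈ A.verts) (hxB : x ∈ B.verts) : A = B :=
  Subgraph.eq_of_connected_of_neighborSet_eq hA.2.1 hB.2.1
    (fun _ hy => hA.neighborSet_eq_sdiff hT hy) (fun _ hy => hB.neighborSet_eq_sdiff hT hy) hxA hxB

/-- The regular subgraphs off `T` that avoid `y` are regular subgraphs off `S` other than `H₀`,
and at most one regular subgraph off `T` contains `y`. -/
theorem regCount_insert_sdiff_singleton {S : Set V} {x y : V}
    (hT : MaxFreeSubset G H (insert x (S \ {y})))
    (hle : regCount H S (H.maxDegree - G.minDegree) ≤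
      regCount H (insert x (S \ {y})) (H.maxDegree - G.minDegree))
    {H₀ : H.Subgraph} (hH₀ : IsRegConnSubgraphOff H S (H.maxDegree - G.minDegree) H₀)
    (hx : x ∈ H₀.verts) :
    regCount H (insert x (S \ {y})) (H.maxDegree - G.minDegree) =
        regCount H S (H.maxDegree - G.minDegree) ∧
      ∃ C, IsRegConnSubgraphOff H (insert x (S \ {y})) (H.maxDegree - G.minDegree) C ∧
        y ∈ C.verts := by
  set r := H.maxDegree - G.minDegree
  set T := insert x (S \ {y})
  set Y := {C | IsRegConnSubgraphOff H T r C ∧ y ∈ C.verts}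
  have hcover : {C | IsRegConnSubgraphOff H T r C} ⊆
      Y ∪ ({C | IsRegConnSubgraphOff H S r C} \ {H₀}) := by
    intro C hC
    by_cases hyC : y ∈ C.verts
    · exact Or.inl ⟨hC, hyC⟩
    have hCxS : C.verts ⊆ (insert x S)ᶜ := by
      rintro z hz (rfl | hzS)
      · exact hC.1 hz (Set.mem_insert z _)
      · exact hC.1 hz (Set.mem_insert_of_mem x ⟨hzS, fun h => hyC (h ▸ hz)⟩)
    refine Or.inr ⟨⟨fun z hz hzS => hCxS hz (Set.mem_insert_of_mem x hzS), hC.2⟩, ?_⟩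
    rintro rfl
    exact hCxS hx (Set.mem_insert x S)
  have hY : Y.ncard ≤ 1 := (Set.ncard_le_one (Set.toFinite _)).2 fun A hA B hB =>
    hA.1.eq_of_mem hT hB.1 hA.2 hB.2
  have hT_le := (Set.ncard_le_ncard hcover).trans (Set.ncard_union_le _ _)
  rw [Set.ncard_sdiff_singleton_of_mem (s := {C | IsRegConnSubgraphOff H S r C}) hH₀] at hT_le
  have hS_pos : 0 < regCount H S r := (Set.ncard_pos (Set.toFinite _)).2 ⟨H₀, hH₀⟩
  change regCount H S r ≤ regCount H T r at hle
  change regCount H T r ≤ Y.ncard + (regCount H S r - 1) at hT_le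
  have hY_pos : Y.Nonempty := Set.nonempty_of_ncard_ne_zero (by omega)
  exact ⟨by omega, hY_pos⟩

end Regular

section Components

variable {V : Type*} {H : SimpleGraph V}

theorem reachable_insert_sdiff_of_walk {S : Set V} {x : V} {s t c : S}
    (p : (H.induce S).Walk t c) (hp : s ∉ p.support) (hcx : H.Adj c x)
    (ht : (t : V) ∈ insert x (S \ {(s : V)})) :
    (H.induce (insert x (S \ {(s : V)}))).Reachable ⟨t, ht⟩ ⟨x, Set.mem_insert x _⟩ := by
  have hq : ∀ v ∈ (p.map (Embedding.induce S).toHom).support, v ∈ insert x (S \ {(s : V)}) := by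
    intro v hv
    rw [Walk.support_map, List.mem_map] at hv
    obtain ⟨v, hv, rfl⟩ := hv
    exact Set.mem_insert_of_mem x ⟨v.2, fun h => hp (Subtype.ext h ▸ hv)⟩
  exact ((p.map _).induce _ hq).reachable.trans (Adj.reachable (hcx :))

/-- Trading a vertex `s ∈ S` for `x ∉ S` merges every component of `H[S]` that contains a
neighbour of `x` into the component of `x`, and loses no component when `s` is not a cut vertex. -/
theorem compCount_insert_sdiff_singleton_lt [Finite V] {S : Set V} {x : V} (hx : x ∉ S) (s : S)
    (hcut : ∀ t : S, (H.induce S).Reachable s t → t ≠ s →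
      ∃ (c : S) (p : (H.induce S).Walk t c), s ∉ p.support ∧ H.Adj c x)
    (hother : ∃ t c : S, ¬(H.induce S).Reachable s t ∧ (H.induce S).Reachable t c ∧ H.Adj c x) :
    compCount H (insert x (S \ {(s : V)})) < compCount H S := by
  classical
  set T := insert x (S \ {(s : V)})
  have hmem : ∀ t : S, t ≠ s → (t : V) ∈ T := fun t hts =>
    Set.mem_insert_of_mem x ⟨t.2, fun h => hts (Subtype.ext h)⟩
  let f : S → (H.induce T).ConnectedComponent := fun t =>
    if hts : t = s then (H.induce T).connectedComponentMk ⟨x, Set.mem_insert x _⟩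
    else (H.induce T).connectedComponentMk ⟨t, hmem t hts⟩
  have hf_walk : ∀ (t c : S) (p : (H.induce S).Walk t c), s ∉ p.support → H.Adj c x →
      f t = f s := by
    intro t c p hp hcx
    have hts : t ≠ s := fun h => hp (h ▸ p.start_mem_support)
    simp only [f, dif_pos, dif_neg hts]
    exact ConnectedComponent.sound (reachable_insert_sdiff_of_walk p hp hcx _)
  have hf_comp : ∀ t, (H.induce S).Reachable s t → f t = f s := fun t hst => by
    by_cases hts : t = s
    · rw [hts]
    obtain ⟨c, p, hp, hcx⟩ := hcut t hst hts
    exact hf_walk t c p hp hcx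
  obtain ⟨t, c, hst, htc, hcx⟩ := hother
  obtain ⟨p⟩ := htc
  have hp : s ∉ p.support := fun hs => hst (p.takeUntil s hs).reachable.symm
  refine card_connectedComponent_lt_of_surjective f (fun a b hab => ?_) (fun κ => ?_) hst
    (hf_walk t c p hp hcx).symm
  · by_cases has : a = s
    · subst has
      exact (hf_comp b hab.reachable).symm
    by_cases hbs : b = s
    · subst hbs
      exact hf_comp a hab.symm.reachable
    simp only [f, dif_neg has, dif_neg hbs]
    exact ConnectedComponent.sound (Adj.reachable (hab :))
  induction κ using ConnectedComponent.ind with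
  | h v =>
    obtain ⟨v, rfl | ⟨hvS, hvs⟩⟩ := v
    · exact ⟨s, by simp [f]⟩
    · refine ⟨⟨v, hvS⟩, ?_⟩
      have hne : (⟨v, hvS⟩ : S) ≠ s := fun h => hvs (congrArg Subtype.val h)
      simp only [f, dif_neg hne]

end Components

section Extremal

variable {α V : Type*} [Fintype α] [Fintype V] {G : SimpleGraph α} [DecidableRel G.Adj]
  {H : SimpleGraph V} [DecidableRel H.Adj] {S : Set V} {H₀ Gx : H.Subgraph} {x : V}

/-- For `y ≠ x`, trading `y` for `x` puts `y` on a regular subgraph off the new set, which still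
has `Gx` as a copy of `G` through `y`. -/
theorem neighborSet_eq_of_unique_copy (hS : MaxFreeSubset G H S)
    (hreg : ∀ T : Set V, MaxFreeSubset G H T →
      regCount H S (H.maxDegree - G.minDegree) ≤ regCount H T (H.maxDegree - G.minDegree))
    (hH₀ : IsRegConnSubgraphOff H S (H.maxDegree - G.minDegree) H₀) (hx : x ∈ H₀.verts)
    (hGx : IsCopyIn G H (insert x S) Gx)
    (hGxU : ∀ K : H.Subgraph, IsCopyIn G H (insert x S) K → K = Gx) :
    ∀ y ∈ Gx.verts, Gx.neighborSet y = H.neighborSet y ∩ insert x S := by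
  intro y hy
  rcases hGx.1 hy with rfl | hyS
  · rw [(hH₀.neighborSet_eq hS.1 hx hGx).1, Set.inter_insert_of_notMem H.notMem_neighborSet_self]
  have hT := hS.insert_sdiff_singleton (hH₀.1 hx) hyS hGxU hy
  obtain ⟨-, C, hC, hyC⟩ := regCount_insert_sdiff_singleton hT (hreg _ hT) hH₀ hx
  have hGxT : IsCopyIn G H (insert y (insert x (S \ {y}))) Gx := by
    refine ⟨hGx.1.trans ?_, hGx.2⟩
    rw [Set.insert_comm, Set.insert_sdiff_singleton]
    exact Set.insert_subset_insert (Set.subset_insert _ _)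
  rw [(hC.neighborSet_eq hT.1 hyC hGxT).1]
  ext z
  simp only [Set.mem_inter_iff, Set.mem_insert_iff, Set.mem_sdiff, Set.mem_singleton_iff,
    mem_neighborSet]
  exact and_congr_right fun hyz => or_congr_right (and_iff_left hyz.ne')

/-- If `Gx - x` met two components of `H[S]`, trading for `x` a non-cut vertex `s` of one of them
would give a maximum `G`-free set with as many regular subgraphs but fewer components. -/
theorem reachable_of_mem_unique_copy (hG : G.Connected) (hS : MaxFreeSubset G H S)
    (hreg : ∀ T : Set V, MaxFreeSubset G H T →
      regCount H S (H.maxDegree - G.minDegree) ≤ regCount H T (H.maxDegree - G.minDegree))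
    (hcomp : ∀ T : Set V, MaxFreeSubset G H T →
      regCount H T (H.maxDegree - G.minDegree) = regCount H S (H.maxDegree - G.minDegree) →
      compCount H S ≤ compCount H T)
    (hH₀ : IsRegConnSubgraphOff H S (H.maxDegree - G.minDegree) H₀) (hx : x ∈ H₀.verts)
    (hGx : IsCopyIn G H (insert x S) Gx)
    (hGxU : ∀ K : H.Subgraph, IsCopyIn G H (insert x S) K → K = Gx) {a b : S}
    (ha : (a : V) ∈ Gx.verts) (hb : (b : V) ∈ Gx.verts) : (H.induce S).Reachable a b := by
  by_contra hab
  have hxS : x ∉ S := hH₀.1 hx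
  have hGx_conn := hGx.connected hG
  have hxGx : x ∈ Gx.verts := hGx.mem_verts_of_not_hasCopy hS.1
  obtain ⟨c₁, hc₁x, hac₁⟩ := hGx_conn.exists_adj_reachable_induce hxS hGx.1 hxGx a.2 ha
  obtain ⟨c₂, hc₂x, hbc₂⟩ := hGx_conn.exists_adj_reachable_induce hxS hGx.1 hxGx b.2 hb
  obtain ⟨s, hc₁s, hs⟩ := exists_forall_exists_walk_notMem_support (H.induce S) c₁
  have hsGx : (s : V) ∈ Gx.verts := by
    refine Subgraph.mem_verts_of_reachable_induce (fun y hy => ?_) (hac₁.trans hc₁s) ha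
    rw [neighborSet_eq_of_unique_copy hS hreg hH₀ hx hGx hGxU y hy]
    exact Set.inter_subset_inter_right _ (Set.subset_insert _ _)
  have hT := hS.insert_sdiff_singleton hxS s.2 hGxU hsGx
  have hT_count := (regCount_insert_sdiff_singleton hT (hreg _ hT) hH₀ hx).1
  refine (hcomp _ hT hT_count).not_gt <| compCount_insert_sdiff_singleton_lt hxS s
    (fun t hst hts => ?_) ⟨b, c₂, fun hsb => hab ((hac₁.trans hc₁s).trans hsb), hbc₂, hc₂x⟩
  obtain ⟨p, hp⟩ := hs t (hc₁s.trans hst) hts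
  exact ⟨c₁, p, hp, hc₁x⟩

theorem deleteVerts_eq_induce_connectedComponent (hG : G.Connected) (hS : MaxFreeSubset G H S)
    (hreg : ∀ T : Set V, MaxFreeSubset G H T →
      regCount H S (H.maxDegree - G.minDegree) ≤ regCount H T (H.maxDegree - G.minDegree))
    (hcomp : ∀ T : Set V, MaxFreeSubset G H T →
      regCount H T (H.maxDegree - G.minDegree) = regCount H S (H.maxDegree - G.minDegree) →
      compCount H S ≤ compCount H T)
    (hH₀ : IsRegConnSubgraphOff H S (H.maxDegree - G.minDegree) H₀) (hx : x ∈ H₀.verts)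
    (hGx : IsCopyIn G H (insert x S) Gx)
    (hGxU : ∀ K : H.Subgraph, IsCopyIn G H (insert x S) K → K = Gx) (u : S)
    (hu : (u : V) ∈ Gx.verts) :
    Gx.deleteVerts {x} =
      (⊤ : H.Subgraph).induce (Subtype.val '' ((H.induce S).connectedComponentMk u).supp) := by
  have hxS : x ∉ S := hH₀.1 hx
  have hnbr := neighborSet_eq_of_unique_copy hS hreg hH₀ hx hGx hGxU
  have hverts : Gx.verts \ {x} = Subtype.val '' ((H.induce S).connectedComponentMk u).supp := by
    ext v
    constructor
    · rintro ⟨hv, hvx⟩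
      have hvS : v ∈ S := (hGx.1 hv).resolve_left hvx
      exact ⟨⟨v, hvS⟩, ConnectedComponent.sound
        (reachable_of_mem_unique_copy hG hS hreg hcomp hH₀ hx hGx hGxU hv hu), rfl⟩
    · rintro ⟨t, ht, rfl⟩
      refine ⟨Subgraph.mem_verts_of_reachable_induce (fun y hy => ?_)
        (ConnectedComponent.exact ht).symm hu, fun h => hxS (h ▸ t.2)⟩
      rw [hnbr y hy]
      exact Set.inter_subset_inter_right _ (Set.subset_insert _ _)
  refine Subgraph.ext hverts (funext₂ fun a b => propext ?_)
  rw [Subgraph.deleteVerts_adj, Subgraph.induce_adj, Subgraph.top_adj, ← hverts]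
  constructor
  · rintro ⟨ha, hax, hb, hbx, hab⟩
    exact ⟨⟨ha, hax⟩, ⟨hb, hbx⟩, hab.adj_sub⟩
  · rintro ⟨⟨ha, hax⟩, ⟨hb, hbx⟩, hab⟩
    refine ⟨ha, hax, hb, hbx, ?_⟩
    change b ∈ Gx.neighborSet a
    rw [hnbr a ha]
    exact ⟨hab, hGx.1 hb⟩

end Extremal

theorem no_common_neighbor_of_different_deleted_copies_general
    {α : Type*} [Fintype α] (G : SimpleGraph α) [DecidableRel G.Adj]
    {V : Type*} [Fintype V] (H : SimpleGraph V) [DecidableRel H.Adj]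
    (hGconn : G.Connected)
    (S : Set V) (hS : MaxFreeSubset G H S)
    (hreg : ∀ T : Set V, MaxFreeSubset G H T →
      regCount H S (H.maxDegree - G.minDegree) ≤ regCount H T (H.maxDegree - G.minDegree))
    (hcomp : ∀ T : Set V, MaxFreeSubset G H T →
      regCount H T (H.maxDegree - G.minDegree) = regCount H S (H.maxDegree - G.minDegree) →
      compCount H S ≤ compCount H T)
    (H₀ : H.Subgraph) (hH₀ : IsRegConnSubgraphOff H S (H.maxDegree - G.minDegree) H₀)
    (v w : V) (hv : v ∈ H₀.verts) (hw : w ∈ H₀.verts)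
    (Gv Gw : H.Subgraph)
    (hGv : IsCopyIn G H (insert v S) Gv)
    (hGvUnique : ∀ K : H.Subgraph, IsCopyIn G H (insert v S) K → K = Gv)
    (hGw : IsCopyIn G H (insert w S) Gw)
    (hGwUnique : ∀ K : H.Subgraph, IsCopyIn G H (insert w S) K → K = Gw)
    (hdiff : Gv.deleteVerts {v} ≠ Gw.deleteVerts {w}) :
    H.neighborSet v ∩ H.neighborSet w ∩ S = ∅ := by
  by_contra hne
  obtain ⟨u, ⟨huv, huw⟩, huS⟩ := Set.nonempty_iff_ne_empty.2 hne
  have huGv : u ∈ Gv.verts :=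
    Gv.neighborSet_subset_verts v ((hH₀.neighborSet_eq hS.1 hv hGv).1 ▸ ⟨huv, huS⟩)
  have huGw : u ∈ Gw.verts :=
    Gw.neighborSet_subset_verts w ((hH₀.neighborSet_eq hS.1 hw hGw).1 ▸ ⟨huw, huS⟩)
  exact hdiff <|
    (deleteVerts_eq_induce_connectedComponent hGconn hS hreg hcomp hH₀ hv hGv hGvUnique
      ⟨u, huS⟩ huGv).trans
    (deleteVerts_eq_induce_connectedComponent hGconn hS hreg hcomp hH₀ hw hGw hGwUnique
      ⟨u, huS⟩ huGw).symm

/-- **Claim 4.**  With `S` as before, let `H₀` be a connected `(Δ(H) - d)`-regular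
subgraph of `H ∖ S`, and for `v, w ∈ V(H₀)` let `Gv` and `Gw` be the unique copies of
`G` in `H[S ∪ {v}]` and `H[S ∪ {w}]` respectively.  If `v ≠ w` and
`Gv - v ≠ Gw - w`, then `v` and `w` have no common neighbor in `S`. -/
theorem no_common_neighbor_of_different_deleted_copies
    {α : Type*} [Fintype α] (G : SimpleGraph α) [DecidableRel G.Adj]
    {V : Type*} [Fintype V] (H : SimpleGraph V) [DecidableRel H.Adj]
    (hGconn : G.Connected) (hHconn : H.Connected)
    (hd : 1 ≤ G.minDegree) (hΔd : G.minDegree ≤ H.maxDegree)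
    (S : Set V) (hS : MaxFreeSubset G H S)
    (hreg : ∀ T : Set V, MaxFreeSubset G H T →
      regCount H S (H.maxDegree - G.minDegree) ≤ regCount H T (H.maxDegree - G.minDegree))
    (hcomp : ∀ T : Set V, MaxFreeSubset G H T →
      regCount H T (H.maxDegree - G.minDegree) = regCount H S (H.maxDegree - G.minDegree) →
      compCount H S ≤ compCount H T)
    (H₀ : H.Subgraph) (hH₀ : IsRegConnSubgraphOff H S (H.maxDegree - G.minDegree) H₀)
    (v w : V) (hv : v ∈ H₀.verts) (hw : w ∈ H₀.verts) (hvw : v ≠ w)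
    (Gv Gw : H.Subgraph)
    (hGv : IsCopyIn G H (insert v S) Gv)
    (hGvUnique : ∀ K : H.Subgraph, IsCopyIn G H (insert v S) K → K = Gv)
    (hGw : IsCopyIn G H (insert w S) Gw)
    (hGwUnique : ∀ K : H.Subgraph, IsCopyIn G H (insert w S) K → K = Gw)
    (hdiff : Gv.deleteVerts {v} ≠ Gw.deleteVerts {w}) :
    H.neighborSet v ∩ H.neighborSet w ∩ S = ∅ :=
  no_common_neighbor_of_different_deleted_copies_general G H hGconn S hS hreg hcomp H₀ hH₀ v w hv hw
    Gv Gw hGv hGvUnique hGw hGwUnique hdiff
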